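/- Strong contextuality of the GHZ–Mermin model: let ghz = (e₀⊗e₀⊗e₀ + e₁⊗e₁⊗e₁)/√2 in EuclideanSpace ℂ (Fin 2 × Fin 2 × Fin 2), and for a ∈ {0,1} let vX(a) = (e₀ + (−1)^a e₁)/√2 and vY(a) = (e₀ + (−1)^a·i·e₁)/√2. Then for every assignment of outcomes x_A, x_B, x_C, y_A, y_B, y_C ∈ {0,1} to the six measurements, at least one of the four inner products ⟪vX(x_A)⊗vX(x_B)⊗vX(x_C), ghz⟫, ⟪vX(x_A)⊗vY(y_B)⊗vY(y_C), ghz⟫, ⟪vY(y_A)⊗vX(x_B)⊗vY(y_C), ghz⟫, ⟪vY(y_A)⊗vY(y_B)⊗vX(x_C), ghz⟫ is zero. -/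

import Mathlib

open scoped InnerProductSpace

noncomputable section

/-- Standard basis vectors `e₀, e₁` of `ℂ²`. -/
def e (a : Fin 2) : EuclideanSpace ℂ (Fin 2) := EuclideanSpace.single a 1

/-- Threefold product vector: `(φ⊗χ⊗ξ)(j,k,l) = φ(j)·χ(k)·ξ(l)`. -/
def tp3 (φ χ ξ : EuclideanSpace ℂ (Fin 2)) :
    EuclideanSpace ℂ (Fin 2 × Fin 2 × Fin 2) :=
  WithLp.toLp 2 (fun p => φ p.1 * χ p.2.1 * ξ p.2.2)

/-- The GHZ state `(e₀⊗e₀⊗e₀ + e₁⊗e₁⊗e₁)/√2`. -/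
def ghz : EuclideanSpace ℂ (Fin 2 × Fin 2 × Fin 2) :=
  (Real.sqrt 2 : ℂ)⁻¹ • (tp3 (e 0) (e 0) (e 0) + tp3 (e 1) (e 1) (e 1))

/-- X-basis vectors `vX(a) = (e₀ + (−1)^a e₁)/√2`. -/
def vX (a : Fin 2) : EuclideanSpace ℂ (Fin 2) :=
  (Real.sqrt 2 : ℂ)⁻¹ • (e 0 + ((-1 : ℂ) ^ (a : ℕ)) • e 1)

/-- Y-basis vectors `vY(a) = (e₀ + (−1)^a·i·e₁)/√2`. -/
def vY (a : Fin 2) : EuclideanSpace ℂ (Fin 2) :=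
  (Real.sqrt 2 : ℂ)⁻¹ • (e 0 + (((-1 : ℂ) ^ (a : ℕ)) * Complex.I) • e 1)

/-!
Every X- or Y-outcome state is `(e₀ + i^m e₁)/√2`, with `m = 2a` for `vX a` and `m = 2a + 1`
for `vY a`. The GHZ amplitude of a product of three such states is proportional to
`1 + conj (i^(m₁+m₂+m₃))`, so it vanishes exactly when `m₁ + m₂ + m₃ ≡ 2 (mod 4)`.
The four context exponents are even and add up to `4 (x_A + ⋯ + y_C) + 6 ≡ 2 (mod 4)`,
so they cannot all be `≡ 0 (mod 4)`: this is Mermin's parity argument.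
-/

open Complex

lemma inner_tp3_tp3_e (φ χ ξ : EuclideanSpace ℂ (Fin 2)) (i j k : Fin 2) :
    ⟪tp3 φ χ ξ, tp3 (e i) (e j) (e k)⟫_ℂ = starRingEnd ℂ (φ i * χ j * ξ k) := by
  simp [tp3, e, PiLp.inner_apply, Fintype.sum_prod_type, PiLp.single_apply, mul_comm]

lemma inner_tp3_ghz (φ χ ξ : EuclideanSpace ℂ (Fin 2)) :
    ⟪tp3 φ χ ξ, ghz⟫_ℂ =
      (Real.sqrt 2 : ℂ)⁻¹ * starRingEnd ℂ (φ 0 * χ 0 * ξ 0 + φ 1 * χ 1 * ξ 1) := by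
  rw [ghz, inner_smul_right, inner_add_right, inner_tp3_tp3_e, inner_tp3_tp3_e, map_add]

def phaseState (z : ℂ) : EuclideanSpace ℂ (Fin 2) :=
  (Real.sqrt 2 : ℂ)⁻¹ • (e 0 + z • e 1)

lemma phaseState_apply_zero (z : ℂ) : phaseState z 0 = (Real.sqrt 2 : ℂ)⁻¹ := by
  simp [phaseState, e]

lemma phaseState_apply_one (z : ℂ) : phaseState z 1 = (Real.sqrt 2 : ℂ)⁻¹ * z := by
  simp [phaseState, e]

lemma inner_tp3_phaseState_ghz_eq_zero_iff (z₁ z₂ z₃ : ℂ) :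
    ⟪tp3 (phaseState z₁) (phaseState z₂) (phaseState z₃), ghz⟫_ℂ = 0 ↔ z₁ * z₂ * z₃ = -1 := by
  have hsqrt : (Real.sqrt 2 : ℂ)⁻¹ ≠ 0 := by simp
  have hsum : phaseState z₁ 0 * phaseState z₂ 0 * phaseState z₃ 0
      + phaseState z₁ 1 * phaseState z₂ 1 * phaseState z₃ 1
      = (Real.sqrt 2 : ℂ)⁻¹ ^ 3 * (1 + z₁ * z₂ * z₃) := by
    simp only [phaseState_apply_zero, phaseState_apply_one]; ring
  rw [inner_tp3_ghz, hsum, mul_eq_zero, map_eq_zero, mul_eq_zero, add_comm,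
    ← eq_neg_iff_add_eq_zero]
  simp [hsqrt]

lemma I_pow_eq_neg_one_iff (n : ℕ) : I ^ n = -1 ↔ n % 4 = 2 := by
  rw [I_pow_eq_pow_mod]
  have hlt : n % 4 < 4 := Nat.mod_lt n (by norm_num)
  interval_cases n % 4 <;> norm_num [I_sq, I_pow_three, Complex.ext_iff]

lemma vX_eq_phaseState (a : Fin 2) : vX a = phaseState (I ^ (2 * (a : ℕ))) := by
  rw [vX, phaseState, pow_mul, I_sq]

lemma vY_eq_phaseState (a : Fin 2) : vY a = phaseState (I ^ (2 * (a : ℕ) + 1)) := by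
  rw [vY, phaseState, pow_succ, pow_mul, I_sq]

lemma inner_tp3_phaseState_I_pow_ghz_eq_zero_iff (m n k : ℕ) :
    ⟪tp3 (phaseState (I ^ m)) (phaseState (I ^ n)) (phaseState (I ^ k)), ghz⟫_ℂ = 0 ↔
      (m + n + k) % 4 = 2 := by
  rw [inner_tp3_phaseState_ghz_eq_zero_iff, ← pow_add, ← pow_add, I_pow_eq_neg_one_iff]

/-- Strong contextuality of the GHZ–Mermin model: every global assignment of
outcomes to the six measurements `X_A, Y_A, X_B, Y_B, X_C, Y_C` restricts to an
impossible (zero-amplitude) event in at least one of the four measurement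
contexts `XXX`, `XYY`, `YXY`, `YYX`. -/
theorem ghz_mermin_strong_contextuality (xA xB xC yA yB yC : Fin 2) :
    ⟪tp3 (vX xA) (vX xB) (vX xC), ghz⟫_ℂ = 0 ∨
    ⟪tp3 (vX xA) (vY yB) (vY yC), ghz⟫_ℂ = 0 ∨
    ⟪tp3 (vY yA) (vX xB) (vY yC), ghz⟫_ℂ = 0 ∨
    ⟪tp3 (vY yA) (vY yB) (vX xC), ghz⟫_ℂ = 0 := by
  simp only [vX_eq_phaseState, vY_eq_phaseState, inner_tp3_phaseState_I_pow_ghz_eq_zero_iff]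
  omega
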